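/- Nonexistence of unbounded-to-bounded regular matrices: Let X, Y be Banach spaces, T : X → Y a nonzero linear operator, and I, J ideals on ℕ with I tall. Then there is no matrix A = (A_{n,k}) of linear operators in L(X,Y) such that for every sequence x ∈ X^ℕ that is I-convergent (not necessarily bounded), Ax is well defined, bounded, and J-converges to T(I-lim x). -/

import Mathlib

/-!
Rows of `A` are finitely supported: otherwise an infinite `I`-set of columns carries a sequence,
`I`-convergent to `0` whatever its values, whose row terms have norm `1` infinitely often.
Testing on `Pi.single k v` shows that columns `J`-converge to `0`; as `T x₀ ≠ 0`, infinitely many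
columns act nontrivially on `x₀`, and tallness gives an infinite `I`-set `S` of them. A gliding hump
on `S` produces coefficients `c` with `A (c • x₀)` unbounded, although `c • x₀` is `I`-convergent.
-/

open Filter Finset Function

lemma tendsto_zero_of_tendsto_sum_range {E : Type*} [SeminormedAddCommGroup E] {f : ℕ → E} {y : E}
    (h : Tendsto (fun m => ∑ k ∈ range m, f k) atTop (nhds y)) : Tendsto f atTop (nhds 0) := by
  simpa [sum_range_succ_sub_sum] using (h.comp (tendsto_add_atTop_nat 1)).sub h

lemma eq_tsum_of_tendsto_sum_range {E : Type*} [NormedAddCommGroup E] {f : ℕ → E} {y : E}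
    (hf : (support f).Finite) (h : Tendsto (fun m => ∑ k ∈ range m, f k) atTop (nhds y)) :
    y = ∑' k, f k :=
  tendsto_nhds_unique h (summable_of_hasFiniteSupport hf).hasSum.tendsto_sum_nat

lemma LinearMap.exists_norm_apply_eq_one {X Y : Type*} [SeminormedAddCommGroup X] [NormedSpace ℝ X]
    [NormedAddCommGroup Y] [NormedSpace ℝ Y] {a : X →ₗ[ℝ] Y} (ha : a ≠ 0) : ∃ v, ‖a v‖ = 1 := by
  obtain ⟨v, hv⟩ := DFunLike.ne_iff.1 ha
  refine ⟨‖a v‖⁻¹ • v, ?_⟩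
  rw [map_smul, norm_smul, norm_inv, norm_norm, inv_mul_cancel₀ (norm_ne_zero_iff.2 hv)]

lemma Set.Infinite.exists_infinite_subset_forall_lt_notMem {S : Set ℕ} (hS : S.Infinite)
    (F : ℕ → Set ℕ) (hF : ∀ k, (F k).Finite) :
    ∃ K ⊆ S, K.Infinite ∧ ∀ k ∈ K, ∀ k' ∈ K, k < k' → k' ∉ F k := by
  obtain ⟨κ, hκS, hκ⟩ := exists_seq_of_forall_finset_exists (· ∈ S) (fun k k' => k < k' ∧ k' ∉ F k)
    fun s _ => by
      obtain ⟨N, hN⟩ := (s.finite_toSet.union (s.finite_toSet.biUnion fun k _ => hF k)).bddAbove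
      obtain ⟨y, hyS, hNy⟩ := hS.exists_gt N
      refine ⟨y, hyS, fun k hk => ⟨(hN (Or.inl hk)).trans_lt hNy, fun hy => ?_⟩⟩
      exact (hN (Or.inr (Set.mem_biUnion hk hy))).not_gt hNy
  have hmono : StrictMono κ := fun m n h => (hκ m n h).1
  refine ⟨Set.range κ, Set.range_subset_iff.2 hκS,
    Set.infinite_range_of_injective hmono.injective, ?_⟩
  rintro _ ⟨m, rfl⟩ _ ⟨n, rfl⟩ h
  exact (hκ m n (hmono.lt_iff_lt.1 h)).2

section GlidingHump

variable {Y : Type*} [NormedAddCommGroup Y] [NormedSpace ℝ Y]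

open Classical in
/-- Chosen so that in row `i` the diagonal term `c i • u i i` exceeds the earlier ones by `i`. -/
noncomputable def triangularCoeff (u : ℕ → ℕ → Y) (K : Set ℕ) : ℕ → ℝ
  | i => if i ∈ K then ((i : ℝ) + ‖∑ j : Fin i, triangularCoeff u K j • u i j‖) / ‖u i i‖ else 0
termination_by i => i
decreasing_by exact j.isLt

lemma triangularCoeff_of_notMem {u : ℕ → ℕ → Y} {K : Set ℕ} {i : ℕ} (hi : i ∉ K) :
    triangularCoeff u K i = 0 := by
  rw [triangularCoeff, if_neg hi]

lemma le_norm_sum_triangularCoeff_smul {u : ℕ → ℕ → Y} {K : Set ℕ} {i : ℕ} (hi : i ∈ K)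
    (hu : u i i ≠ 0) :
    (i : ℝ) ≤ ‖∑ j ∈ range (i + 1), triangularCoeff u K j • u i j‖ := by
  set s := ∑ j ∈ range i, triangularCoeff u K j • u i j
  have hc : triangularCoeff u K i * ‖u i i‖ = i + ‖s‖ := by
    rw [triangularCoeff, if_pos hi,
      Fin.sum_univ_eq_sum_range (fun j => triangularCoeff u K j • u i j),
      div_mul_cancel₀ _ (norm_ne_zero_iff.2 hu)]
  have hc_nonneg : 0 ≤ triangularCoeff u K i := by
    rw [triangularCoeff, if_pos hi]
    positivity
  calc (i : ℝ) = ‖triangularCoeff u K i • u i i‖ - ‖s‖ := by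
        rw [norm_smul, Real.norm_of_nonneg hc_nonneg, hc]; ring
    _ ≤ ‖triangularCoeff u K i • u i i + s‖ := norm_sub_le_norm_add _ _
    _ = _ := by rw [sum_range_succ, add_comm]

lemma exists_unbounded_tsum_smul {b : ℕ → ℕ → Y} (hb : ∀ n, (support (b n)).Finite) {S : Set ℕ}
    (hS : S.Infinite) (hSb : ∀ k ∈ S, ∃ n, b n k ≠ 0) :
    ∃ c : ℕ → ℝ, (∀ k ∉ S, c k = 0) ∧ ∀ r : ℝ, ∃ n, r < ‖∑' k, c k • b n k‖ := by
  choose! row hrow using hSb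
  obtain ⟨K, hKS, hKinf, hK⟩ :=
    hS.exists_infinite_subset_forall_lt_notMem (fun k => support (b (row k))) fun k => hb _
  set c := triangularCoeff (fun k j => b (row k) j) K
  refine ⟨c, fun k hk => triangularCoeff_of_notMem fun h => hk (hKS h), fun r => ?_⟩
  obtain ⟨k, hkK, hrk⟩ := hKinf.exists_gt ⌈r⌉₊
  refine ⟨row k, ?_⟩
  have hsum : ∑' j, c j • b (row k) j = ∑ j ∈ range (k + 1), c j • b (row k) j := by
    refine tsum_eq_sum fun j hj => ?_
    have hkj : k < j := by simpa [Nat.lt_succ_iff] using hj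
    by_cases hjK : j ∈ K
    · rw [notMem_support.1 (hK k hkK j hjK hkj), smul_zero]
    · rw [show c j = 0 from triangularCoeff_of_notMem hjK, zero_smul]
  calc r ≤ ⌈r⌉₊ := Nat.le_ceil r
    _ < k := by exact_mod_cast hrk
    _ ≤ ‖∑' j, c j • b (row k) j‖ :=
        hsum ▸ le_norm_sum_triangularCoeff_smul hkK (hrow k (hKS hkK))

end GlidingHump

def IdealTendsto {E : Type*} [SeminormedAddCommGroup E] (I : Set (Set ℕ)) (x : ℕ → E) (η : E) :
    Prop :=
  ∀ ε : ℝ, 0 < ε → {n | ε ≤ ‖x n - η‖} ∈ I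

lemma idealTendsto_zero_of_support_subset {E : Type*} [SeminormedAddCommGroup E]
    {I : Set (Set ℕ)} (hI_sub : ∀ S S' : Set ℕ, S ∈ I → S' ⊆ S → S' ∈ I) {S : Set ℕ} (hS : S ∈ I)
    {x : ℕ → E} (hx : support x ⊆ S) : IdealTendsto I x 0 := by
  intro ε hε
  refine hI_sub S _ hS fun n hn => hx fun hxn => ?_
  simp [hxn] at hn
  linarith

lemma idealTendsto_of_finite {E : Type*} [SeminormedAddCommGroup E]
    {I : Set (Set ℕ)} (hI_fin : ∀ S : Set ℕ, S.Finite → S ∈ I) {x : ℕ → E} {η : E}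
    (hx : (support fun n => x n - η).Finite) : IdealTendsto I x η := by
  intro ε hε
  refine hI_fin _ (hx.subset fun n hn hxn => ?_)
  simp [hxn] at hn
  linarith

lemma IdealTendsto.tendsto_comk {E : Type*} [SeminormedAddCommGroup E] {I : Set (Set ℕ)}
    {he : ∅ ∈ I} {hmono : ∀ t, t ∈ I → ∀ s ⊆ t, s ∈ I}
    {hunion : ∀ s, s ∈ I → ∀ t, t ∈ I → s ∪ t ∈ I} {x : ℕ → E} {η : E} (h : IdealTendsto I x η) :
    Tendsto x (comk (· ∈ I) he hmono hunion) (nhds η) := by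
  refine Metric.tendsto_nhds.2 fun ε hε => mem_comk.2 ?_
  convert h ε hε using 2
  ext
  simp [dist_eq_norm]

section BoundedRegular

variable {X Y : Type*} [NormedAddCommGroup X] [NormedSpace ℝ X] [NormedAddCommGroup Y]
  [NormedSpace ℝ Y]

/-- `A ∈ (c(X,I), c^b(Y,J))` with `J-lim Ax = T (I-lim x)`. -/
def IsBoundedRegular (I J : Set (Set ℕ)) (T : X →ₗ[ℝ] Y) (A : ℕ → ℕ → X →ₗ[ℝ] Y) : Prop :=
  ∀ x : ℕ → X, ∀ η : X, IdealTendsto I x η →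
    ∃ y : ℕ → Y, (∀ n, Tendsto (fun m => ∑ k ∈ range m, A n k (x k)) atTop (nhds (y n))) ∧
      (∃ r : ℝ, ∀ n, ‖y n‖ ≤ r) ∧ IdealTendsto J y (T η)

namespace IsBoundedRegular

variable {I J : Set (Set ℕ)} {T : X →ₗ[ℝ] Y} {A : ℕ → ℕ → X →ₗ[ℝ] Y}

lemma bddAbove_and_idealTendsto_tsum (hA : IsBoundedRegular I J T A) {x : ℕ → X} {η : X}
    (hx : IdealTendsto I x η) (hfin : ∀ n, (support fun k => A n k (x k)).Finite) :
    (∃ r : ℝ, ∀ n, ‖∑' k, A n k (x k)‖ ≤ r) ∧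
      IdealTendsto J (fun n => ∑' k, A n k (x k)) (T η) := by
  obtain ⟨y, hy, hy_bdd, hy_lim⟩ := hA x η hx
  obtain rfl : y = fun n => ∑' k, A n k (x k) :=
    funext fun n => eq_tsum_of_tendsto_sum_range (hfin n) (hy n)
  exact ⟨hy_bdd, hy_lim⟩

lemma finite_setOf_ne_zero (hA : IsBoundedRegular I J T A)
    (hI_sub : ∀ S S' : Set ℕ, S ∈ I → S' ⊆ S → S' ∈ I)
    (hI_tall : ∀ S : Set ℕ, S.Infinite → ∃ S' : Set ℕ, S' ⊆ S ∧ S'.Infinite ∧ S' ∈ I) (n : ℕ) :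
    {k | A n k ≠ 0}.Finite := by
  by_contra hinf
  obtain ⟨K, hK, hKinf, hKI⟩ := hI_tall _ hinf
  choose! v hv using fun k (hk : k ∈ K) => LinearMap.exists_norm_apply_eq_one (hK hk)
  obtain ⟨y, hy, -⟩ := hA (K.indicator v) 0
    (idealTendsto_zero_of_support_subset hI_sub hKI Set.support_indicator_subset)
  have hterm := tendsto_zero_iff_norm_tendsto_zero.1 (tendsto_zero_of_tendsto_sum_range (hy n))
  obtain ⟨N, hN⟩ := eventually_atTop.1 (hterm.eventually_lt_const one_pos)
  obtain ⟨k, hkK, hNk⟩ := hKinf.exists_gt N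
  have hlt := hN k hNk.le
  rw [Set.indicator_of_mem hkK, hv k hkK] at hlt
  exact lt_irrefl _ hlt

lemma idealTendsto_column (hA : IsBoundedRegular I J T A)
    (hI_fin : ∀ S : Set ℕ, S.Finite → S ∈ I) (k : ℕ) (v : X) :
    IdealTendsto J (fun n => A n k v) 0 := by
  set x : ℕ → X := Pi.single k v
  have hsupp : ∀ n, (support fun j => A n j (x j)) ⊆ {k} := fun n j hj => by
    by_contra hjk
    exact hj (by simp [x, Pi.single_eq_of_ne hjk])
  have hx : IdealTendsto I x 0 :=
    idealTendsto_of_finite hI_fin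
      ((Set.finite_singleton k).subset (by simpa using Pi.support_single_subset))
  have hlim :=
    (hA.bddAbove_and_idealTendsto_tsum hx fun n => (Set.finite_singleton k).subset (hsupp n)).2
  have hrow : ∀ n, ∑' j, A n j (x j) = A n k v := fun n =>
    (tsum_eq_single k fun j hj => by simp [x, Pi.single_eq_of_ne hj]).trans (by simp [x])
  simpa [hrow] using hlim

lemma infinite_setOf_exists_apply_ne_zero (hA : IsBoundedRegular I J T A)
    (hI_fin : ∀ S : Set ℕ, S.Finite → S ∈ I)
    (hJ_sub : ∀ S S' : Set ℕ, S ∈ J → S' ⊆ S → S' ∈ J)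
    (hJ_union : ∀ S S' : Set ℕ, S ∈ J → S' ∈ J → S ∪ S' ∈ J)
    (hJ_fin : ∀ S : Set ℕ, S.Finite → S ∈ J) (hJ_proper : Set.univ ∉ J) {x₀ : X}
    (hx₀ : T x₀ ≠ 0) : {k | ∃ n, A n k x₀ ≠ 0}.Infinite := by
  intro hfin
  let 𝓙 : Filter ℕ := comk (· ∈ J) (hJ_fin ∅ Set.finite_empty) (fun t ht s hs => hJ_sub t s ht hs)
    fun s hs t ht => hJ_union s t hs ht
  have : 𝓙.NeBot := ⟨fun h => hJ_proper (by simpa using mem_comk.1 (h ▸ mem_bot : ∅ ∈ 𝓙))⟩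
  have hsum : ∀ n, ∑' k, A n k x₀ = ∑ k ∈ hfin.toFinset, A n k x₀ := fun n =>
    tsum_eq_sum fun k hk => (by simpa using hk : ∀ m, A m k x₀ = 0) n
  have hlim : Tendsto (fun n => ∑' k, A n k x₀) 𝓙 (nhds (T x₀)) :=
    (hA.bddAbove_and_idealTendsto_tsum (x := fun _ => x₀) (idealTendsto_of_finite hI_fin (by simp))
      fun n => hfin.subset fun k hk => ⟨n, hk⟩).2.tendsto_comk
  have hzero : Tendsto (fun n => ∑ k ∈ hfin.toFinset, A n k x₀) 𝓙 (nhds 0) := by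
    simpa using tendsto_finsetSum _ fun k _ => (hA.idealTendsto_column hI_fin k x₀).tendsto_comk
  exact hx₀ (tendsto_nhds_unique (by simpa only [hsum] using hlim) hzero)

end IsBoundedRegular

end BoundedRegular

theorem stmt12_general {X Y : Type*} [NormedAddCommGroup X] [NormedSpace ℝ X]
    [NormedAddCommGroup Y] [NormedSpace ℝ Y]
    (T : X →ₗ[ℝ] Y) (hT : T ≠ 0)
    (I J : Set (Set ℕ))
    (hI_sub : ∀ S S' : Set ℕ, S ∈ I → S' ⊆ S → S' ∈ I)
    (hI_fin : ∀ S : Set ℕ, S.Finite → S ∈ I)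
    (hI_tall : ∀ S : Set ℕ, S.Infinite → ∃ S' : Set ℕ, S' ⊆ S ∧ S'.Infinite ∧ S' ∈ I)
    (hJ_sub : ∀ S S' : Set ℕ, S ∈ J → S' ⊆ S → S' ∈ J)
    (hJ_union : ∀ S S' : Set ℕ, S ∈ J → S' ∈ J → S ∪ S' ∈ J)
    (hJ_fin : ∀ S : Set ℕ, S.Finite → S ∈ J)
    (hJ_proper : Set.univ ∉ J) :
    ¬ ∃ A : ℕ → ℕ → X →ₗ[ℝ] Y,
      ∀ x : ℕ → X, ∀ η : X, (∀ ε : ℝ, 0 < ε → {n | ε ≤ ‖x n - η‖} ∈ I) →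
        ∃ y : ℕ → Y,
          (∀ n, Tendsto (fun m => ∑ k ∈ Finset.range m, A n k (x k)) atTop (nhds (y n))) ∧
          (∃ r : ℝ, ∀ n, ‖y n‖ ≤ r) ∧
          (∀ ε : ℝ, 0 < ε → {n | ε ≤ ‖y n - T η‖} ∈ J) := by
  rintro ⟨A, hA⟩
  replace hA : IsBoundedRegular I J T A := hA
  obtain ⟨x₀, hx₀⟩ := DFunLike.ne_iff.1 hT
  have hrow := hA.finite_setOf_ne_zero hI_sub hI_tall
  obtain ⟨S, hSsub, hSinf, hSI⟩ :=
    hI_tall _ (hA.infinite_setOf_exists_apply_ne_zero hI_fin hJ_sub hJ_union hJ_fin hJ_proper hx₀)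
  obtain ⟨c, hcS, hc⟩ := exists_unbounded_tsum_smul (b := fun n k => A n k x₀)
    (fun n => (hrow n).subset fun k hk hA0 => hk (by simp [hA0])) hSinf hSsub
  have hx : IdealTendsto I (fun k => c k • x₀) 0 :=
    idealTendsto_zero_of_support_subset hI_sub hSI fun k hk =>
      by_contra fun hkS => hk (by simp [hcS k hkS])
  obtain ⟨⟨r, hr⟩, -⟩ := hA.bddAbove_and_idealTendsto_tsum hx
    fun n => (hrow n).subset fun k hk hA0 => hk (by simp [hA0])
  obtain ⟨n, hn⟩ := hc r
  simp only [map_smul] at hr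
  exact (hr n).not_gt hn

/-- Nonexistence of unbounded-to-bounded regular matrices: if `T ≠ 0` and `I` is tall,
then no matrix `A` of linear operators maps every (not necessarily bounded) `I`-convergent
sequence `x` to a well-defined bounded sequence `Ax` which `J`-converges to `T (I-lim x)`. -/
theorem stmt12 {X Y : Type*} [NormedAddCommGroup X] [NormedSpace ℝ X] [CompleteSpace X]
    [NormedAddCommGroup Y] [NormedSpace ℝ Y] [CompleteSpace Y]
    (T : X →ₗ[ℝ] Y) (hT : T ≠ 0)
    (I J : Set (Set ℕ))
    (hI_sub : ∀ S S' : Set ℕ, S ∈ I → S' ⊆ S → S' ∈ I)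
    (hI_union : ∀ S S' : Set ℕ, S ∈ I → S' ∈ I → S ∪ S' ∈ I)
    (hI_fin : ∀ S : Set ℕ, S.Finite → S ∈ I)
    (hI_proper : Set.univ ∉ I)
    (hI_tall : ∀ S : Set ℕ, S.Infinite → ∃ S' : Set ℕ, S' ⊆ S ∧ S'.Infinite ∧ S' ∈ I)
    (hJ_sub : ∀ S S' : Set ℕ, S ∈ J → S' ⊆ S → S' ∈ J)
    (hJ_union : ∀ S S' : Set ℕ, S ∈ J → S' ∈ J → S ∪ S' ∈ J)
    (hJ_fin : ∀ S : Set ℕ, S.Finite → S ∈ J)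
    (hJ_proper : Set.univ ∉ J) :
    ¬ ∃ A : ℕ → ℕ → X →ₗ[ℝ] Y,
      ∀ x : ℕ → X, ∀ η : X, (∀ ε : ℝ, 0 < ε → {n | ε ≤ ‖x n - η‖} ∈ I) →
        ∃ y : ℕ → Y,
          (∀ n, Tendsto (fun m => ∑ k ∈ Finset.range m, A n k (x k)) atTop (nhds (y n))) ∧
          (∃ r : ℝ, ∀ n, ‖y n‖ ≤ r) ∧
          (∀ ε : ℝ, 0 < ε → {n | ε ≤ ‖y n - T η‖} ∈ J) :=
  stmt12_general T hT I J hI_sub hI_fin hI_tall hJ_sub hJ_union hJ_fin hJ_proper
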